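/- Let u ∈ H¹_{rad}(ℝ²) be a radial function and p ≥ 1. Then for every r > 0, |u(r)| ≤ C r^{−1/(p+1)} ‖u‖_{L^{2p}}^{p/(p+1)} ‖∇u‖_{L²}^{1/(p+1)} for some universal constant C (depending only on p). -/

import Mathlib

/-!
Write `u x = f ‖x‖`. Since `u ∈ L^{2p}`, `f` is small at points arbitrarily far out, so the
fundamental theorem of calculus for `f ^ (p + 1)` on `(r, ∞)` gives
`|f r| ^ (p + 1) ≤ (p + 1) ∫_r^∞ |f|^p |f'|`. Inserting the weight `s / r ≥ 1` turns the right
side into `(p + 1) / (2π r) ∫_{ℝ²} |u|^p |∇u|` in polar coordinates (the radial derivative `f'` is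
dominated by `|∇u|`), and Cauchy–Schwarz bounds that integral by `‖u‖_{2p}^p ‖∇u‖_2`.
-/

open MeasureTheory Real Set Metric
open scoped ENNReal

theorem lintegral_fun_norm_addHaar {E : Type*} [NormedAddCommGroup E] [NormedSpace ℝ E]
    [Nontrivial E] [FiniteDimensional ℝ E] [MeasurableSpace E] [BorelSpace E]
    (μ : Measure E) [μ.IsAddHaarMeasure] {G : ℝ → ℝ≥0∞} (hG : Measurable G) :
    ∫⁻ x, G ‖x‖ ∂μ = μ.toSphere univ *
      ∫⁻ y in Ioi (0 : ℝ), ENNReal.ofReal (y ^ (Module.finrank ℝ E - 1)) * G y := by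
  have hGm : Measurable fun z : sphere (0 : E) 1 × Ioi (0 : ℝ) => G z.2 :=
    hG.comp (measurable_subtype_coe.comp measurable_snd)
  calc ∫⁻ x, G ‖x‖ ∂μ = ∫⁻ x : ({0}ᶜ : Set E), G ‖x.1‖ ∂(μ.comap (↑)) := by
        rw [lintegral_subtype_comap (measurableSet_singleton 0).compl (fun x => G ‖x‖),
          restrict_compl_singleton]
    _ = ∫⁻ z, G z.2 ∂(μ.toSphere.prod (.volumeIoiPow (Module.finrank ℝ E - 1))) := by
        simpa using μ.measurePreserving_homeomorphUnitSphereProd.lintegral_comp hGm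
    _ = μ.toSphere univ * ∫⁻ y : Ioi (0 : ℝ), G y ∂(.volumeIoiPow (Module.finrank ℝ E - 1)) := by
        rw [lintegral_prod _ hGm.aemeasurable]
        simp [lintegral_const, mul_comm]
    _ = _ := by
        rw [Measure.volumeIoiPow, lintegral_withDensity_eq_lintegral_mul _
          (f := fun y : Ioi (0 : ℝ) => ENNReal.ofReal (y.1 ^ (Module.finrank ℝ E - 1)))
          (g := fun y : Ioi (0 : ℝ) => G y.1)
          (measurable_subtype_coe.pow_const _).ennreal_ofReal (hG.comp measurable_subtype_coe)]
        exact congrArg _ (lintegral_subtype_comap measurableSet_Ioi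
          fun y => ENNReal.ofReal (y ^ (Module.finrank ℝ E - 1)) * G y)

theorem lintegral_Ioi_le_inv_mul_lintegral_Ioi_pow_mul {G : ℝ → ℝ≥0∞} {r : ℝ} (hr : 0 < r)
    (k : ℕ) :
    ∫⁻ y in Ioi r, G y ≤
      (ENNReal.ofReal (r ^ k))⁻¹ * ∫⁻ y in Ioi 0, ENNReal.ofReal (y ^ k) * G y := by
  have hrk : ENNReal.ofReal (r ^ k) ≠ 0 := by simpa using pow_pos hr k
  calc ∫⁻ y in Ioi r, G y
      ≤ ∫⁻ y in Ioi r, (ENNReal.ofReal (r ^ k))⁻¹ * (ENNReal.ofReal (y ^ k) * G y) := by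
        refine setLIntegral_mono' measurableSet_Ioi fun y hy => ?_
        calc G y = (ENNReal.ofReal (r ^ k))⁻¹ * (ENNReal.ofReal (r ^ k) * G y) := by
              rw [← mul_assoc, ENNReal.inv_mul_cancel hrk ENNReal.ofReal_ne_top, one_mul]
          _ ≤ _ := by gcongr; exact le_of_lt hy
    _ = (ENNReal.ofReal (r ^ k))⁻¹ * ∫⁻ y in Ioi r, ENNReal.ofReal (y ^ k) * G y :=
        lintegral_const_mul' _ _ (ENNReal.inv_ne_top.2 hrk)
    _ ≤ _ := by gcongr

theorem lintegral_Ioi_le_lintegral_fun_norm_addHaar {E : Type*} [NormedAddCommGroup E]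
    [NormedSpace ℝ E] [Nontrivial E] [FiniteDimensional ℝ E] [MeasurableSpace E] [BorelSpace E]
    (μ : Measure E) [μ.IsAddHaarMeasure] {G : ℝ → ℝ≥0∞} (hG : Measurable G) {r : ℝ}
    (hr : 0 < r) :
    ∫⁻ y in Ioi r, G y ≤ (ENNReal.ofReal (r ^ (Module.finrank ℝ E - 1)))⁻¹ *
      ((μ.toSphere univ)⁻¹ * ∫⁻ x, G ‖x‖ ∂μ) := by
  rw [lintegral_fun_norm_addHaar μ hG, ← mul_assoc (μ.toSphere univ)⁻¹,
    ENNReal.inv_mul_cancel (Measure.measure_univ_ne_zero.2 μ.toSphere_ne_zero)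
      (measure_ne_top _ _), one_mul]
  exact lintegral_Ioi_le_inv_mul_lintegral_Ioi_pow_mul hr _

theorem exists_gt_norm_lt_of_lintegral_Ioi_ne_top {E : Type*} [NormedAddCommGroup E]
    {f : ℝ → E} {a q ε : ℝ} (hq : 0 ≤ q) (hf : ∫⁻ y in Ioi a, ‖f y‖ₑ ^ q ≠ ∞) (hε : 0 < ε) :
    ∃ R > a, ‖f R‖ < ε := by
  by_contra! hlarge
  refine hf (top_le_iff.1 ?_)
  calc ∞ = ∫⁻ _ in Ioi a, ENNReal.ofReal ε ^ q := by
        simp [ENNReal.rpow_eq_zero_iff, hε]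
    _ ≤ ∫⁻ y in Ioi a, ‖f y‖ₑ ^ q := by
        refine setLIntegral_mono' measurableSet_Ioi fun y hy => ?_
        rw [← ofReal_norm]
        exact ENNReal.rpow_le_rpow (ENNReal.ofReal_le_ofReal (hlarge y hy)) hq

theorem norm_le_integral_Ioi_norm_of_hasDerivAt {E : Type*} [NormedAddCommGroup E]
    [NormedSpace ℝ E] [CompleteSpace E] {φ φ' : ℝ → E} {a : ℝ}
    (hderiv : ∀ x ∈ Ici a, HasDerivAt φ (φ' x) x) (hint : IntegrableOn φ' (Ioi a))
    (hsmall : ∀ ε > 0, ∃ R > a, ‖φ R‖ ≤ ε) :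
    ‖φ a‖ ≤ ∫ x in Ioi a, ‖φ' x‖ := by
  refine le_of_forall_pos_le_add fun ε hε => ?_
  obtain ⟨R, hR, hφR⟩ := hsmall ε hε
  have hFTC : ∫ x in a..R, φ' x = φ R - φ a :=
    intervalIntegral.integral_eq_sub_of_hasDerivAt
      (fun x hx => hderiv x (by rw [uIcc_of_le hR.le] at hx; exact hx.1))
      ((intervalIntegrable_iff_integrableOn_Ioc_of_le hR.le).2
        (hint.mono_set Ioc_subset_Ioi_self))
  calc ‖φ a‖ = ‖φ R - ∫ x in a..R, φ' x‖ := by rw [hFTC, sub_sub_cancel]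
    _ ≤ ‖φ R‖ + ∫ x in Ioc a R, ‖φ' x‖ := by
        refine (norm_sub_le _ _).trans (add_le_add le_rfl ?_)
        rw [intervalIntegral.integral_of_le hR.le]
        exact norm_integral_le_integral_norm _
    _ ≤ ε + ∫ x in Ioi a, ‖φ' x‖ :=
        add_le_add hφR <| setIntegral_mono_set hint.norm (.of_forall fun _ => norm_nonneg _)
          Ioc_subset_Ioi_self.eventuallyLE
    _ = _ := add_comm _ _

theorem enorm_pow_succ_le_lintegral_Ioi {f : ℝ → ℝ} (hf : Differentiable ℝ f) {r : ℝ}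
    (hdecay : ∀ ε > 0, ∃ R > r, ‖f R‖ < ε) (p : ℕ) :
    ‖f r‖ₑ ^ (p + 1) ≤ (p + 1) * ∫⁻ y in Ioi r, ‖f y‖ₑ ^ p * ‖deriv f y‖ₑ := by
  set φ' : ℝ → ℝ := fun y => (p + 1 : ℝ) * f y ^ p * deriv f y
  have hφ' : ∀ y, ‖φ' y‖ₑ = (p + 1) * (‖f y‖ₑ ^ p * ‖deriv f y‖ₑ) := fun y => by
    rw [enorm_mul, enorm_mul, enorm_pow, mul_assoc, ← Nat.cast_add_one, Real.enorm_natCast]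
    norm_cast
  have hlint : ∫⁻ y in Ioi r, ‖φ' y‖ₑ = (p + 1) * ∫⁻ y in Ioi r, ‖f y‖ₑ ^ p * ‖deriv f y‖ₑ := by
    simp_rw [hφ']
    exact lintegral_const_mul' _ _ (by simp)
  by_cases hfin : ∫⁻ y in Ioi r, ‖f y‖ₑ ^ p * ‖deriv f y‖ₑ = ∞
  · simp [hfin]
  have hint : IntegrableOn φ' (Ioi r) := by
    refine ⟨?_, ?_⟩
    · exact ((hf.continuous.measurable.pow_const p).const_mul _ |>.mul
        (measurable_deriv f)).aestronglyMeasurable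
    · rw [HasFiniteIntegral, hlint]
      exact ENNReal.mul_lt_top (by simp) (lt_top_iff_ne_top.2 hfin)
  have hderiv : ∀ x ∈ Ici r, HasDerivAt (fun y => f y ^ (p + 1)) (φ' x) x := fun x _ => by
    simpa [φ'] using (hf x).hasDerivAt.fun_pow (p + 1)
  have hsmall : ∀ ε > 0, ∃ R > r, ‖f R ^ (p + 1)‖ ≤ ε := fun ε hε => by
    obtain ⟨R, hR, hfR⟩ := hdecay (min ε 1) (lt_min hε one_pos)
    refine ⟨R, hR, ?_⟩
    rw [norm_pow]
    calc ‖f R‖ ^ (p + 1) ≤ ‖f R‖ :=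
          pow_le_of_le_one (norm_nonneg _) (hfR.le.trans (min_le_right _ _)) p.succ_ne_zero
      _ ≤ ε := hfR.le.trans (min_le_left _ _)
  calc ‖f r‖ₑ ^ (p + 1) = ENNReal.ofReal ‖f r ^ (p + 1)‖ := by rw [ofReal_norm, enorm_pow]
    _ ≤ ENNReal.ofReal (∫ y in Ioi r, ‖φ' y‖) :=
        ENNReal.ofReal_le_ofReal (norm_le_integral_Ioi_norm_of_hasDerivAt hderiv hint hsmall)
    _ = _ := by rw [ofReal_integral_norm_eq_lintegral_enorm hint, hlint]

theorem norm_deriv_comp_smul_le_norm_fderiv {E F : Type*} [NormedAddCommGroup E]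
    [NormedSpace ℝ E] [NormedAddCommGroup F] [NormedSpace ℝ F] {u : E → F} (hu : Differentiable ℝ u)
    (hrad : ∀ x y : E, ‖x‖ = ‖y‖ → u x = u y) {e : E} (he : ‖e‖ = 1) (x : E) :
    ‖deriv (fun s : ℝ => u (s • e)) ‖x‖‖ ≤ ‖fderiv ℝ u x‖ := by
  obtain ⟨v, hv, hxv⟩ : ∃ v : E, ‖v‖ = 1 ∧ ‖x‖ • v = x := by
    rcases eq_or_ne x 0 with rfl | hx
    · exact ⟨e, he, by simp⟩
    · exact ⟨‖x‖⁻¹ • x, norm_smul_inv_norm hx, smul_inv_smul₀ (norm_ne_zero_iff.2 hx) x⟩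
  -- Along the ray through `x` the profile is the same, so its derivative is a directional
  -- derivative of `u` at `x`.
  have hprofile : (fun s : ℝ => u (s • e)) = fun s => u (s • v) :=
    funext fun s => hrad _ _ (by simp [norm_smul, he, hv])
  have hd : HasDerivAt (fun s : ℝ => u (s • v)) (fderiv ℝ u x v) ‖x‖ := by
    simpa [Function.comp_def, hxv] using (hu (‖x‖ • v)).hasFDerivAt.comp_hasDerivAt ‖x‖
      ((hasDerivAt_id ‖x‖).smul_const v)
  rw [hprofile, hd.deriv]
  simpa [hv] using (fderiv ℝ u x).le_opNorm v

theorem lintegral_enorm_rpow_mul_le {α F G : Type*} [MeasurableSpace α] {μ : Measure α}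
    [NormedAddCommGroup F] [NormedAddCommGroup G] {f : α → F} {g : α → G} {q : ℝ} (hq : 0 < q)
    (hf : AEStronglyMeasurable f μ) (hg : AEStronglyMeasurable g μ) :
    ∫⁻ x, ‖f x‖ₑ ^ q * ‖g x‖ₑ ∂μ ≤ eLpNorm f (ENNReal.ofReal (2 * q)) μ ^ q * eLpNorm g 2 μ := by
  have hholder := eLpNorm_le_eLpNorm_mul_eLpNorm_of_nnnorm (p := 2) (q := 2) (r := 1)
    (hf.norm.aemeasurable.pow_const q).aestronglyMeasurable hg.norm (· * ·) 1
    (.of_forall fun x => by simp [nnnorm_mul])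
  rw [eLpNorm_one_eq_lintegral_enorm, eLpNorm_norm_rpow f hq, eLpNorm_norm] at hholder
  have hexp : 2 * ENNReal.ofReal q = ENNReal.ofReal (2 * q) := by
    rw [ENNReal.ofReal_mul zero_le_two, ENNReal.ofReal_ofNat]
  calc ∫⁻ x, ‖f x‖ₑ ^ q * ‖g x‖ₑ ∂μ = ∫⁻ x, ‖‖f x‖ ^ q * ‖g x‖‖ₑ ∂μ :=
        lintegral_congr fun x => by
          rw [enorm_mul, Real.enorm_rpow_of_nonneg (norm_nonneg _) hq.le, enorm_norm, enorm_norm]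
    _ ≤ _ := hholder.trans_eq (by rw [hexp, ENNReal.coe_one, one_mul])

theorem enorm_pow_succ_le_of_radial {E : Type*} [NormedAddCommGroup E] [NormedSpace ℝ E]
    [Nontrivial E] [FiniteDimensional ℝ E] [MeasurableSpace E] [BorelSpace E]
    (μ : Measure E) [μ.IsAddHaarMeasure] {u : E → ℝ} (hu : Differentiable ℝ u)
    (hrad : ∀ x y : E, ‖x‖ = ‖y‖ → u x = u y) {p : ℕ} (hp : 0 < p)
    (hu_fin : eLpNorm u (ENNReal.ofReal (2 * p)) μ ≠ ∞) {x : E} (hx : x ≠ 0) :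
    ‖u x‖ₑ ^ (p + 1) ≤ (p + 1) * ((ENNReal.ofReal (‖x‖ ^ (Module.finrank ℝ E - 1)))⁻¹ *
      ((μ.toSphere univ)⁻¹ * (eLpNorm u (ENNReal.ofReal (2 * p)) μ ^ p *
        eLpNorm (fun z => ‖fderiv ℝ u z‖) 2 μ))) := by
  obtain ⟨e, he⟩ := exists_norm_eq E zero_le_one
  set f : ℝ → ℝ := fun s => u (s • e)
  have hux : ∀ z, u z = f ‖z‖ := fun z => hrad _ _ (by simp [norm_smul, he])
  have hf : Differentiable ℝ f := hu.comp (differentiable_id.smul_const e)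
  have hr : 0 < ‖x‖ := norm_pos_iff.2 hx
  have hdecay : ∀ ε > 0, ∃ R > ‖x‖, ‖f R‖ < ε := by
    refine fun ε hε =>
      exists_gt_norm_lt_of_lintegral_Ioi_ne_top (q := 2 * p) (by positivity) ?_ hε
    refine ne_top_of_le_ne_top ?_ (lintegral_Ioi_le_lintegral_fun_norm_addHaar μ
      (hf.continuous.measurable.enorm.pow_const _) hr)
    simp_rw [← hux]
    refine ENNReal.mul_ne_top (ENNReal.inv_ne_top.2 (ENNReal.ofReal_pos.2 (pow_pos hr _)).ne')
      (ENNReal.mul_ne_top (ENNReal.inv_ne_top.2 ?_) ?_)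
    · exact Measure.measure_univ_ne_zero.2 μ.toSphere_ne_zero
    · simpa [hp] using (lintegral_rpow_enorm_lt_top_of_eLpNorm_lt_top (by simpa using hp.ne')
        ENNReal.ofReal_ne_top (lt_top_iff_ne_top.2 hu_fin)).ne
  calc ‖u x‖ₑ ^ (p + 1) = ‖f ‖x‖‖ₑ ^ (p + 1) := by rw [hux]
    _ ≤ (p + 1) * ∫⁻ y in Ioi ‖x‖, ‖f y‖ₑ ^ p * ‖deriv f y‖ₑ :=
        enorm_pow_succ_le_lintegral_Ioi hf hdecay p
    _ ≤ (p + 1) * ((ENNReal.ofReal (‖x‖ ^ (Module.finrank ℝ E - 1)))⁻¹ *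
          ((μ.toSphere univ)⁻¹ * ∫⁻ z, ‖f ‖z‖‖ₑ ^ p * ‖deriv f ‖z‖‖ₑ ∂μ)) := by
        gcongr
        exact lintegral_Ioi_le_lintegral_fun_norm_addHaar μ
          ((hf.continuous.measurable.enorm.pow_const _).mul (measurable_deriv f).enorm) hr
    _ ≤ (p + 1) * ((ENNReal.ofReal (‖x‖ ^ (Module.finrank ℝ E - 1)))⁻¹ *
          ((μ.toSphere univ)⁻¹ * ∫⁻ z, ‖u z‖ₑ ^ (p : ℝ) * ‖‖fderiv ℝ u z‖‖ₑ ∂μ)) := by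
        gcongr _ * (_ * (_ * ?_))
        refine lintegral_mono fun z => ?_
        rw [← hux, ENNReal.rpow_natCast, enorm_norm]
        gcongr
        exact enorm_le_iff_norm_le.2 (norm_deriv_comp_smul_le_norm_fderiv hu hrad he z)
    _ ≤ _ := by
        gcongr
        rw [← ENNReal.rpow_natCast]
        exact lintegral_enorm_rpow_mul_le (by exact_mod_cast hp)
          hu.continuous.aestronglyMeasurable (measurable_fderiv ℝ u).norm.aestronglyMeasurable

theorem le_mul_rpow_of_pow_succ_le {a c r A B : ℝ} {p : ℕ} (ha : 0 ≤ a) (hc : 0 ≤ c)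
    (hr : 0 < r) (hA : 0 ≤ A) (hB : 0 ≤ B) (h : a ^ (p + 1) ≤ c * r⁻¹ * (A ^ p * B)) :
    a ≤ c ^ ((1 : ℝ) / (p + 1)) * r ^ (-(1 : ℝ) / (p + 1)) * A ^ ((p : ℝ) / (p + 1)) *
      B ^ ((1 : ℝ) / (p + 1)) := by
  have hn : (0 : ℝ) < p + 1 := by positivity
  calc a = (a ^ (p + 1)) ^ ((1 : ℝ) / (p + 1)) := by
        rw [← rpow_natCast, ← rpow_mul ha]; push_cast; rw [mul_one_div_cancel hn.ne', rpow_one]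
    _ ≤ (c * r⁻¹ * (A ^ p * B)) ^ ((1 : ℝ) / (p + 1)) := by gcongr
    _ = _ := by
        rw [mul_rpow (by positivity) (by positivity), mul_rpow hc (by positivity),
          mul_rpow (by positivity) hB, inv_rpow hr.le, ← rpow_neg hr.le, ← rpow_natCast,
          ← rpow_mul hA, neg_div, mul_one_div]
        ring

theorem radial_estimate (p : ℕ) (hp : 1 ≤ p) :
    ∃ C : ℝ, 0 < C ∧
      ∀ u : EuclideanSpace ℝ (Fin 2) → ℝ,
        Differentiable ℝ u →
        (∀ x y : EuclideanSpace ℝ (Fin 2), ‖x‖ = ‖y‖ → u x = u y) →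
        MeasureTheory.MemLp u (ENNReal.ofReal (2 * p))
          (volume : Measure (EuclideanSpace ℝ (Fin 2))) →
        MeasureTheory.MemLp (fun x => ‖fderiv ℝ u x‖) 2
          (volume : Measure (EuclideanSpace ℝ (Fin 2))) →
        ∀ (r : ℝ) (x : EuclideanSpace ℝ (Fin 2)), 0 < r → ‖x‖ = r →
          |u x| ≤ C * r ^ (-(1 : ℝ) / (p + 1)) *
            ((MeasureTheory.eLpNorm u (ENNReal.ofReal (2 * p))
                (volume : Measure (EuclideanSpace ℝ (Fin 2)))).toReal ^ ((p : ℝ) / (p + 1))) *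
            ((MeasureTheory.eLpNorm (fun x => ‖fderiv ℝ u x‖) 2
                (volume : Measure (EuclideanSpace ℝ (Fin 2)))).toReal ^ ((1 : ℝ) / (p + 1))) := by
  -- `K = 2π` is the length of the unit circle.
  set K := (volume : Measure (EuclideanSpace ℝ (Fin 2))).toSphere univ
  have hK0 : K ≠ 0 := Measure.measure_univ_ne_zero.2 (Measure.toSphere_ne_zero _)
  have hK : 0 < K.toReal := ENNReal.toReal_pos hK0 (measure_ne_top _ _)
  refine ⟨((p + 1) * K.toReal⁻¹) ^ ((1 : ℝ) / (p + 1)), by positivity, ?_⟩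
  rintro u hu hrad hu_mem hgrad_mem r x hr rfl
  have hbound := enorm_pow_succ_le_of_radial volume hu hrad hp hu_mem.eLpNorm_ne_top
    (norm_pos_iff.1 hr)
  rw [finrank_euclideanSpace_fin, Nat.add_one_sub_one, pow_one] at hbound
  have hbound_real := ENNReal.toReal_mono (ENNReal.mul_ne_top (by simp)
    (ENNReal.mul_ne_top (ENNReal.inv_ne_top.2 (by simpa using hr))
      (ENNReal.mul_ne_top (ENNReal.inv_ne_top.2 hK0)
        (ENNReal.mul_ne_top (ENNReal.pow_ne_top hu_mem.eLpNorm_ne_top)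
          hgrad_mem.eLpNorm_ne_top)))) hbound
  simp only [ENNReal.toReal_mul, ENNReal.toReal_pow, ENNReal.toReal_inv, toReal_enorm,
    ENNReal.toReal_ofReal hr.le, ← Nat.cast_add_one, ENNReal.toReal_natCast,
    norm_eq_abs] at hbound_real
  push_cast at hbound_real
  refine le_mul_rpow_of_pow_succ_le (abs_nonneg _) (by positivity) hr ENNReal.toReal_nonneg
    ENNReal.toReal_nonneg (hbound_real.trans_eq (by ring))
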